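/- arXiv:1703.02230 — 4 statements merged into one kernel-verified Lean document; each statement's English description precedes it below -/
import Mathlib

section
/- Let σ = (u_1, ..., u_p) be a sequence of integers each belonging to {1, ..., k}. If p > k(m-1), then there exists a subsequence of m consecutive elements u_i, u_{i+1}, ..., u_{i+m-1} such that the last element u_{i+m-1} is greater than or equal to all elements in that subsequence. -/
/-- Lemma 10: if a sequence of `p > k(m-1)` integers takes values in `{1,...,k}`, then
there are `m` consecutive elements whose last element is the largest. -/
theorem stmt1 (k m p : ℕ) (hm : 1 ≤ m) (u : ℕ → ℕ)
    (hu : ∀ t, 1 ≤ t → t ≤ p → u t ∈ Finset.Icc 1 k)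
    (hp : k * (m - 1) < p) :
    ∃ i, 1 ≤ i ∧ i + m - 1 ≤ p ∧
      ∀ t, i ≤ t → t ≤ i + m - 1 → u t ≤ u (i + m - 1) := by
  have hp1 : 1 ≤ p := by omega
  have hupmem := hu p hp1 le_rfl
  simp only [Finset.mem_Icc] at hupmem
  rcases Nat.eq_zero_or_pos k with hk | hk
  · omega
  suffices H : ∀ c j, m + c * (m - 1) ≤ j → j ≤ p → k ≤ u j + c →
      ∃ i, 1 ≤ i ∧ i + m - 1 ≤ p ∧
        ∀ t, i ≤ t → t ≤ i + m - 1 → u t ≤ u (i + m - 1) by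
    obtain ⟨k', rfl⟩ : ∃ k', k = k' + 1 := ⟨k - 1, by omega⟩
    have hexp : (k' + 1) * (m - 1) = k' * (m - 1) + (m - 1) := by ring
    exact H k' p (by omega) le_rfl (by omega)
  intro c
  induction c with
  | zero =>
    intro j hj hjp hkj
    refine ⟨j - (m - 1), by omega, by omega, ?_⟩
    intro t ht1 ht2
    have hje : j - (m - 1) + m - 1 = j := by omega
    rw [hje] at ht2 ⊢
    have := hu t (by omega) (by omega)
    simp only [Finset.mem_Icc] at this
    omega
  | succ c ih =>
    intro j hj hjp hkj
    have hexp : (c + 1) * (m - 1) = c * (m - 1) + (m - 1) := by ring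
    by_cases hall : ∀ t, j - (m - 1) ≤ t → t ≤ j → u t ≤ u j
    · refine ⟨j - (m - 1), by omega, by omega, ?_⟩
      intro t ht1 ht2
      have hje : j - (m - 1) + m - 1 = j := by omega
      rw [hje] at ht2 ⊢
      exact hall t ht1 ht2
    · push_neg at hall
      obtain ⟨s, hs1, hs2, hs3⟩ := hall
      exact ih s (by omega) (by omega) (by omega)
end

section
/- If a digraph D has chromatic number at least k, then D contains a directed path with k vertices. -/
universe u

section Defs
variable {V : Type u}

/-- `l` is a directed path from `x` to `y` in the digraph with arc relation `A`. -/
def DiPath (A : V → V → Prop) (x y : V) (l : List V) : Prop :=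
  l.Chain' A ∧ l.Nodup ∧ l.head? = some x ∧ l.getLast? = some y

/-- The internal vertices of a path given as a list. -/
def internals (l : List V) : List V := l.tail.dropLast

/-- `(a,b)` is an arc of the directed cycle represented by the list `l`. -/
def cycArc (l : List V) (a b : V) : Prop :=
  (a, b) ∈ l.zip l.tail ∨ (l.getLast? = some a ∧ l.head? = some b)

/-- `l` represents a directed cycle of the digraph with arc relation `A`;
its length (number of arcs = number of vertices) is `l.length`. -/
def DiCycle (A : V → V → Prop) (l : List V) : Prop :=
  l ≠ [] ∧ l.Chain' A ∧ l.Nodup ∧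
    ∀ a b, l.getLast? = some a → l.head? = some b → A a b

/-- A digraph is strongly connected. -/
def StrongConn (A : V → V → Prop) : Prop := ∀ x y : V, ∃ l, DiPath A x y l

/-- The chromatic number of a digraph: that of its underlying undirected graph. -/
noncomputable def dchrom (A : V → V → Prop) : ℕ∞ :=
  (SimpleGraph.fromRel A).chromaticNumber

/-- Two paths are internally disjoint. -/
def IntDisj (P Q : List V) : Prop :=
  (∀ v ∈ internals P, v ∉ internals Q) ∧ (∀ v ∈ internals Q, v ∉ internals P)

/-- `D` contains a subdivision of the bispindle `B(k1,k2;k3)`: vertices `x`, `y`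
and three pairwise internally disjoint dipaths, two from `x` to `y` of lengths
at least `k1` and `k2`, and one from `y` to `x` of length at least `k3`. -/
def SubdivB (A : V → V → Prop) (k1 k2 k3 : ℕ) : Prop :=
  ∃ (x y : V) (P1 P2 P3 : List V),
    DiPath A x y P1 ∧ DiPath A x y P2 ∧ DiPath A y x P3 ∧
    k1 + 1 ≤ P1.length ∧ k2 + 1 ≤ P2.length ∧ k3 + 1 ≤ P3.length ∧
    P1 ≠ P2 ∧ IntDisj P1 P2 ∧ IntDisj P1 P3 ∧ IntDisj P2 P3

/-- The length of the subpath of the cycle `l` from `a` to `b` (number of arcs). -/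
def cycDist [DecidableEq V] (l : List V) (a b : V) : ℕ :=
  (l.rotate (l.idxOf a)).idxOf b

/-- The subpath (vertex list) of the cycle `l` from `a` to `b`. -/
def cycSub [DecidableEq V] (l : List V) (a b : V) : List V :=
  (l.rotate (l.idxOf a)).take (cycDist l a b + 1)

/-- The intersection of the cycles `Ci` and `Cj` is the common directed subpath
from `a` to `b`, having at most `k` vertices. -/
def InterPath [DecidableEq V] (k : ℕ) (Ci Cj : List V) (a b : V) : Prop :=
  a ∈ Ci ∧ b ∈ Cj ∧ (∀ x, (x ∈ Ci ∧ x ∈ Cj) ↔ x ∈ cycSub Ci a b) ∧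
  cycSub Ci a b = cycSub Cj a b ∧ (cycSub Ci a b).length ≤ k

/-- A `k`-suitable collection of directed cycles: all cycles have length at least `8k`
and any two distinct cycles intersect on a directed subpath of at most `k` vertices. -/
def Suitable [DecidableEq V] (A : V → V → Prop) (k : ℕ) (𝒞 : Set (List V)) : Prop :=
  (∀ C ∈ 𝒞, DiCycle A C ∧ 8 * k ≤ C.length) ∧
  ∀ C ∈ 𝒞, ∀ C' ∈ 𝒞, C ≠ C' → (∃ x, x ∈ C ∧ x ∈ C') → ∃ a b, InterPath k C C' a b

/-- Adjacency in the intersection graph of a collection of cycles. -/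
def interRel (𝒞 : Set (List V)) : List V → List V → Prop :=
  fun C C' => C ∈ 𝒞 ∧ C' ∈ 𝒞 ∧ ∃ x, x ∈ C ∧ x ∈ C'

/-- `(a,b)` is an arc of the union of the cycles of `𝒞`. -/
def unionArc (𝒞 : Set (List V)) (a b : V) : Prop := ∃ C ∈ 𝒞, cycArc C a b

/-- A graph is 2-connected. -/
def TwoConnectedG {W : Type*} (G : SimpleGraph W) : Prop :=
  G.Connected ∧ ∀ w : W, (G.induce {u | u ≠ w}).Connected

end Defs

/-!
Choose a maximal acyclic subdigraph `A'` of `A` and colour each vertex `v` by the number of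
vertices of a longest `A'`-path starting at `v`. Along an arc of `A'` the colour strictly
decreases. An arc `u → v` of `A` outside `A'` would close a cycle if added to `A'`, so `A'` has
a path from `v` to `u`, and again the colours of `u` and `v` differ. Hence the colouring is
proper, and the number of colours used is at most the number of vertices of a longest path.
-/

namespace Relation

variable {V : Type*}

def IsAcyclic (R : V → V → Prop) : Prop := ∀ x, ¬ TransGen R x x

theorem IsAcyclic.nodup {R : V → V → Prop} (hR : IsAcyclic R) {l : List V}
    (hl : l.IsChain R) : l.Nodup :=
  have : Std.Irrefl (TransGen R) := ⟨hR⟩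
  (hl.imp fun _ _ => TransGen.single).pairwise.nodup

theorem TransGen.of_adjoin_arc {R : V → V → Prop} {u v a b : V}
    (h : TransGen (fun x y => R x y ∨ x = u ∧ y = v) a b) :
    TransGen R a b ∨ (ReflTransGen R a u ∧ ReflTransGen R v b) := by
  induction h with
  | single hab =>
    rcases hab with hab | ⟨rfl, rfl⟩
    · exact .inl (.single hab)
    · exact .inr ⟨.refl, .refl⟩
  | tail _ hbc ih =>
    rcases hbc with hbc | ⟨rfl, rfl⟩
    · exact ih.imp (·.tail hbc) fun ⟨hau, hvb⟩ => ⟨hau, hvb.tail hbc⟩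
    · exact .inr ⟨ih.elim TransGen.to_reflTransGen And.left, .refl⟩

theorem IsAcyclic.adjoin_arc {R : V → V → Prop} (hR : IsAcyclic R) {u v : V}
    (hvu : ¬ ReflTransGen R v u) : IsAcyclic (fun x y => R x y ∨ x = u ∧ y = v) := fun x hx =>
  (TransGen.of_adjoin_arc hx).elim (hR x) fun ⟨hxu, hvx⟩ => hvu (hvx.trans hxu)

theorem exists_maximal_isAcyclic_le [Finite V] (A : V → V → Prop) :
    ∃ A' ≤ A, IsAcyclic A' ∧ ∀ u v, A u v → ¬ A' u v → ReflTransGen A' v u := by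
  let S : Set (V → V → Prop) := {R | R ≤ A ∧ IsAcyclic R}
  have hempty : (fun _ _ => False : V → V → Prop) ∈ S :=
    ⟨fun _ _ => False.elim, fun x hx => by cases hx <;> assumption⟩
  obtain ⟨A', ⟨hle, hacyc⟩, hmax⟩ := Set.Finite.exists_maximalFor id S S.toFinite ⟨_, hempty⟩
  refine ⟨A', hle, hacyc, fun u v huv hnot => ?_⟩
  by_contra hvu
  have hgrow : A' ≤ fun x y => A' x y ∨ x = u ∧ y = v := fun _ _ => .inl
  have hmem : (fun x y => A' x y ∨ x = u ∧ y = v) ∈ S :=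
    ⟨fun x y hxy => hxy.elim (hle x y) fun ⟨hx, hy⟩ => hx ▸ hy ▸ huv, hacyc.adjoin_arc hvu⟩
  exact hnot ((hmax hmem hgrow) u v (.inr ⟨rfl, rfl⟩))

end Relation

open Relation

section LongestPath

variable {V : Type*} [Fintype V] {R : V → V → Prop}

noncomputable def longestPathFrom (R : V → V → Prop) (v : V) : ℕ := by
  classical
  exact Nat.findGreatest
    (fun n => ∃ l : List V, l.IsChain R ∧ l.Nodup ∧ l.head? = some v ∧ l.length = n)
    (Fintype.card V)

theorem length_le_longestPathFrom {l : List V} {v : V} (hl : l.IsChain R) (hnd : l.Nodup)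
    (hv : l.head? = some v) : l.length ≤ longestPathFrom R v := by
  classical
  exact Nat.le_findGreatest hnd.length_le_card ⟨l, hl, hnd, hv, rfl⟩

theorem exists_path_length_eq_longestPathFrom (R : V → V → Prop) (v : V) :
    ∃ l : List V, l.IsChain R ∧ l.Nodup ∧ l.head? = some v ∧ l.length = longestPathFrom R v := by
  classical
  exact Nat.findGreatest_spec
    (P := fun n => ∃ l : List V, l.IsChain R ∧ l.Nodup ∧ l.head? = some v ∧ l.length = n)
    (List.nodup_singleton v).length_le_card ⟨[v], .singleton v, List.nodup_singleton v, rfl, rfl⟩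

theorem one_le_longestPathFrom (R : V → V → Prop) (v : V) : 1 ≤ longestPathFrom R v :=
  length_le_longestPathFrom (l := [v]) (.singleton v) (List.nodup_singleton v) rfl

theorem Relation.IsAcyclic.longestPathFrom_lt_of_rel (hR : IsAcyclic R) {u v : V} (huv : R u v) :
    longestPathFrom R v < longestPathFrom R u := by
  obtain ⟨l, hl, -, hv, hlen⟩ := exists_path_length_eq_longestPathFrom R v
  have hchain : (u :: l).IsChain R :=
    List.isChain_cons.mpr ⟨fun w hw => by rw [hv, Option.mem_some_iff] at hw; exact hw ▸ huv, hl⟩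
  have hlen' := length_le_longestPathFrom hchain (hR.nodup hchain) rfl
  simp only [List.length_cons, hlen] at hlen'
  omega

theorem Relation.IsAcyclic.longestPathFrom_lt_of_transGen (hR : IsAcyclic R) {u v : V}
    (huv : TransGen R u v) : longestPathFrom R v < longestPathFrom R u := by
  induction huv with
  | single h => exact hR.longestPathFrom_lt_of_rel h
  | tail _ h ih => exact (hR.longestPathFrom_lt_of_rel h).trans ih

end LongestPath

theorem SimpleGraph.colorable_fromRel_of_forall_path_length_le {V : Type*} [Fintype V]
    (A : V → V → Prop) (n : ℕ) (h : ∀ l : List V, l.IsChain A → l.Nodup → l.length ≤ n) :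
    (fromRel A).Colorable n := by
  obtain ⟨A', hle, hacyc, hback⟩ := exists_maximal_isAcyclic_le A
  have hbound (v : V) : longestPathFrom A' v ≤ n := by
    obtain ⟨l, hl, hnd, -, hlen⟩ := exists_path_length_eq_longestPathFrom A' v
    exact hlen ▸ h l (hl.imp fun x y => hle x y) hnd
  have hne {a b : V} (hab : a ≠ b) (hA : A a b) : longestPathFrom A' a ≠ longestPathFrom A' b := by
    by_cases h' : A' a b
    · exact (hacyc.longestPathFrom_lt_of_rel h').ne'
    · obtain rfl | hba := reflTransGen_iff_eq_or_transGen.mp (hback a b hA h')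
      · exact absurd rfl hab
      · exact (hacyc.longestPathFrom_lt_of_transGen hba).ne
  refine ⟨.mk (fun v => ⟨longestPathFrom A' v - 1, ?_⟩) fun {a b} hab => ?_⟩
  · have := one_le_longestPathFrom A' v
    have := hbound v
    omega
  · have hdiff : longestPathFrom A' a ≠ longestPathFrom A' b :=
      ((fromRel_adj _ a b).mp hab).2.elim (hne hab.ne) fun h => (hne hab.ne.symm h).symm
    have := one_le_longestPathFrom A' a
    have := one_le_longestPathFrom A' b
    simp only [ne_eq, Fin.mk.injEq]
    omega

/-- Gallai–Hasse–Roy–Vitaver: a digraph with chromatic number at least `k`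
contains a directed path on `k` vertices. -/
theorem stmt5 {V : Type u} [Fintype V] (A : V → V → Prop) (k : ℕ)
    (h : (k : ℕ∞) ≤ dchrom A) :
    ∃ l : List V, l.Chain' A ∧ l.Nodup ∧ l.length = k := by
  by_contra hnone
  push Not at hnone
  have hshort (l : List V) (hl : l.IsChain A) (hnd : l.Nodup) : l.length ≤ k - 1 := by
    by_contra hlong
    exact hnone (l.take k) (hl.take k) (hnd.sublist (l.take_sublist k))
      (by rw [List.length_take]; omega)
  have hcol := SimpleGraph.colorable_fromRel_of_forall_path_length_le A (k - 1) hshort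
  have hk : k ≤ k - 1 := by exact_mod_cast h.trans hcol.chromaticNumber_le
  exact hnone [] .nil .nil (by rw [List.length_nil]; omega)
end

section
/- Let D be a strongly connected digraph with chromatic number at least 4. Then D contains a subdivision of B(2,1;1): there exist vertices x, y and three pairwise internally disjoint directed paths, two from x to y of lengths at least 2 and at least 1 respectively, and one from y to x of length at least 1. -/
universe u

/-!
Suppose `D` is strong and contains no subdivision of `B(2,1;1)`; we `3`-colour it by induction on
the number of vertices. Fix a directed cycle `C`. A path between two vertices of `C` with interior
outside `C`, together with the two segments of `C` between its ends, forms a subdivision of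
`B(2,1;1)` unless it is an arc of `C`. Consequently every vertex `v` off `C` is attached to `C`
at a single vertex `a(v)`: all paths from `C` to `v` leave `C` at `a(v)` and all paths from `v`
to `C` return at `a(v)`. For `a ∈ C` the class `{a} ∪ {v | a(v) = a}` induces a smaller strong
digraph, and all arcs between different classes are arcs of `C`. Colour every class by induction
and permute its colours so that its vertex on `C` receives its colour in a proper `3`-colouring of
`C`.
-/

namespace List

variable {α : Type*}

lemma exists_eq_append_cons_first {p : α → Prop} {l : List α} (h : ∃ x ∈ l, p x) :
    ∃ l₁ a l₂, l = l₁ ++ a :: l₂ ∧ p a ∧ ∀ x ∈ l₁, ¬ p x := by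
  classical
  obtain ⟨a, ha⟩ := Option.isSome_iff_exists.1 <|
    List.find?_isSome (p := fun x => decide (p x)) |>.2 (by simpa using h)
  obtain ⟨hpa, l₁, l₂, rfl, h₁⟩ := List.find?_eq_some_iff_append.1 ha
  exact ⟨l₁, a, l₂, rfl, by simpa using hpa, fun x hx => by simpa using h₁ x hx⟩

lemma exists_eq_append_cons_last {p : α → Prop} {l : List α} (h : ∃ x ∈ l, p x) :
    ∃ l₁ a l₂, l = l₁ ++ a :: l₂ ∧ p a ∧ ∀ x ∈ l₂, ¬ p x := by
  obtain ⟨l₁, a, l₂, hl, hpa, h₁⟩ := exists_eq_append_cons_first (l := l.reverse) (by simpa using h)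
  exact ⟨l₂.reverse, a, l₁.reverse, by simpa using congrArg reverse hl, hpa,
    fun x hx => h₁ x (by simpa using hx)⟩

lemma exists_rotate_idxOf_eq [DecidableEq α] {l : List α} {u v : α}
    (hu : u ∈ l) (hv : v ∈ l) (huv : u ≠ v) :
    ∃ r₁ r₂, l.rotate (l.idxOf u) = u :: (r₁ ++ v :: r₂) := by
  have hk := idxOf_lt_length_iff.2 hu
  obtain ⟨t, ht⟩ := head?_eq_some_iff.1 <| by
    rw [head?_rotate hk, getElem?_eq_getElem hk, getElem_idxOf hk]
  have hvt : v ∈ t := by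
    have : v ∈ l.rotate (l.idxOf u) := mem_rotate.2 hv
    rw [ht, mem_cons] at this
    exact this.resolve_left huv.symm
  obtain ⟨r₁, r₂, rfl⟩ := append_of_mem hvt
  exact ⟨r₁, r₂, ht⟩

end List

section Paths

variable {V W : Type*} {A : V → V → Prop} {x y z : V} {l : List V}

@[simp]
lemma internals_cons_append_singleton (m : List V) : internals (x :: (m ++ [y])) = m := by
  simp [internals]

lemma internals_map (f : V → W) (l : List V) : internals (l.map f) = (internals l).map f := by
  simp [internals, List.map_tail, List.map_dropLast]

lemma intDisj_of_disjoint {P Q : List V} (h : (internals P).Disjoint (internals Q)) :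
    IntDisj P Q :=
  ⟨fun _ hP hQ => h hP hQ, fun _ hQ hP => h hP hQ⟩

namespace DiPath

lemma head_mem (h : DiPath A x y l) : x ∈ l :=
  List.mem_of_mem_head? h.2.2.1

lemma getLast_mem (h : DiPath A x y l) : y ∈ l :=
  List.mem_of_mem_getLast? h.2.2.2

lemma of_cons_append {m : List V} (hc : List.IsChain A (x :: (m ++ [y])))
    (hnd : (x :: (m ++ [y])).Nodup) : DiPath A x y (x :: (m ++ [y])) :=
  ⟨hc, hnd, rfl, by rw [← List.cons_append, List.getLast?_concat]⟩

lemma pair (h : A x y) (hxy : x ≠ y) : DiPath A x y [x, y] := by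
  simp [DiPath, List.Chain', h, hxy]

lemma eq_cons_append (h : DiPath A x y l) (hxy : x ≠ y) : ∃ m, l = x :: (m ++ [y]) := by
  obtain ⟨t, rfl⟩ := List.head?_eq_some_iff.1 h.2.2.1
  rcases t.eq_nil_or_concat' with rfl | ⟨m, b, rfl⟩
  · exact absurd (by simpa using h.2.2.2) hxy
  · obtain rfl : b = y := by simpa [List.getLast?_cons] using h.2.2.2
    exact ⟨m, rfl⟩

lemma ne_of_mem_internals (h : DiPath A x y l) (hxy : x ≠ y) (hz : z ∈ internals l) :
    z ∈ l ∧ z ≠ x ∧ z ≠ y := by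
  obtain ⟨m, rfl⟩ := h.eq_cons_append hxy
  have hnd := h.2.1
  simp only [internals_cons_append_singleton] at hz
  refine ⟨by simp [hz], ?_, ?_⟩ <;> rintro rfl <;> grind

lemma exists_arc (h : DiPath A x y l) (hxy : x ≠ y) : ∃ x', A x x' ∧ x ≠ x' := by
  obtain ⟨m, rfl⟩ := h.eq_cons_append hxy
  obtain ⟨x', t, ht⟩ := List.exists_cons_of_ne_nil (by simp : m ++ [y] ≠ [])
  have hc : List.IsChain A (x :: x' :: t) := ht ▸ h.1
  have hnd : (x :: x' :: t).Nodup := ht ▸ h.2.1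
  exact ⟨x', (List.isChain_cons_cons.1 hc).1, by grind⟩

lemma takeUntil {l₁ l₂ : List V} (h : DiPath A x y (l₁ ++ z :: l₂)) : DiPath A x z (l₁ ++ [z]) := by
  obtain ⟨hc, hnd, hh, -⟩ := h
  rw [show l₁ ++ z :: l₂ = (l₁ ++ [z]) ++ l₂ by simp] at hc hnd hh
  exact ⟨hc.left_of_append, hnd.sublist (List.sublist_append_left _ _),
    by rwa [List.head?_append_of_ne_nil _ (by simp)] at hh, List.getLast?_concat⟩

lemma dropUntil {l₁ l₂ : List V} (h : DiPath A x y (l₁ ++ z :: l₂)) : DiPath A z y (z :: l₂) := by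
  obtain ⟨hc, hnd, -, hl⟩ := h
  exact ⟨hc.right_of_append, hnd.sublist (List.sublist_append_right _ _), rfl,
    by rwa [List.getLast?_append_of_ne_nil _ (by simp)] at hl⟩

lemma append {l₁ l₂ : List V} (h₁ : DiPath A x y (l₁ ++ [y])) (h₂ : DiPath A y z (y :: l₂))
    (hd : l₁.Disjoint (y :: l₂)) : DiPath A x z (l₁ ++ y :: l₂) := by
  refine ⟨?_, ?_, ?_, ?_⟩
  · show List.IsChain A _
    simpa using List.IsChain.append_overlap (l₃ := l₂) h₁.1 h₂.1 (by simp)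
  · exact List.Nodup.append (h₁.2.1.sublist (List.sublist_append_left _ _)) h₂.2.1 hd
  · simpa [List.head?_append] using h₁.2.2.1
  · rw [List.getLast?_append_of_ne_nil _ (by simp)]; exact h₂.2.2.2

lemma splice {p q : List V} (hp : DiPath A x y p) (hq : DiPath A y z q) :
    ∃ r w, DiPath A x z r ∧ w ∈ r ∧ w ∈ p ∧ w ∈ q ∧ ∀ u ∈ r, u ∈ p ∨ u ∈ q := by
  obtain ⟨p₁, w, p₂, rfl, hwq, hp₁⟩ :=
    List.exists_eq_append_cons_first (p := (· ∈ q)) ⟨y, hp.getLast_mem, hq.head_mem⟩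
  obtain ⟨q₁, q₂, rfl⟩ := List.append_of_mem hwq
  refine ⟨p₁ ++ w :: q₂, w, hp.takeUntil.append hq.dropUntil fun u hu hu' => hp₁ u hu ?_,
    by simp, by simp, by simp, fun u hu => ?_⟩
  · simp only [List.mem_cons] at hu'; grind
  · simp only [List.mem_append, List.mem_cons] at hu ⊢; tauto

lemma exists_arc_of_not {P : V → Prop} (h : DiPath A x y l) (hx : P x) (hy : ¬ P y) :
    ∃ u ∈ l, ∃ v ∈ l, A u v ∧ P u ∧ ¬ P v := by
  by_contra hcon
  push Not at hcon
  refine hy ((List.IsChain.iff_mem.1 h.1).induction P l ?_ ?_ y h.getLast_mem)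
  · exact fun u v ⟨hu, hv, huv⟩ => hcon u hu v hv huv
  · exact fun hl => (List.head_eq_iff_head?_eq_some hl).2 h.2.2.1 ▸ hx

lemma map_iff {B : W → W → Prop} {f : V → W} (hf : f.Injective) :
    DiPath B (f x) (f y) (l.map f) ↔ DiPath (fun u v => B (f u) (f v)) x y l := by
  simp only [DiPath, List.Chain', List.isChain_map, List.nodup_map_iff hf, List.head?_map,
    List.getLast?_map]
  rw [← Option.map_some, ← Option.map_some (a := y),
    (Option.map_injective hf).eq_iff, (Option.map_injective hf).eq_iff]

end DiPath

end Paths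

section Subdivision

variable {V W : Type*} {A : V → V → Prop} {x y : V}

lemma SubdivB.of_comap {f : W → V} (hf : f.Injective) {k₁ k₂ k₃ : ℕ}
    (h : SubdivB (fun u v => A (f u) (f v)) k₁ k₂ k₃) : SubdivB A k₁ k₂ k₃ := by
  obtain ⟨x, y, P₁, P₂, P₃, h₁, h₂, h₃, hl₁, hl₂, hl₃, hne, d₁₂, d₁₃, d₂₃⟩ := h
  have hdisj {P Q : List W} (h : IntDisj P Q) : IntDisj (P.map f) (Q.map f) := by
    simp only [IntDisj, internals_map, List.mem_map]
    exact ⟨by grind [IntDisj], by grind [IntDisj]⟩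
  exact ⟨f x, f y, P₁.map f, P₂.map f, P₃.map f, (DiPath.map_iff hf).2 h₁,
    (DiPath.map_iff hf).2 h₂, (DiPath.map_iff hf).2 h₃, by simpa using hl₁, by simpa using hl₂,
    by simpa using hl₃, fun h => hne (List.map_injective_iff.2 hf h), hdisj d₁₂, hdisj d₁₃,
    hdisj d₂₃⟩

/-- Two distinct `x`-`y` paths cannot both be the arc `xy`, so one has length at least `2`. -/
lemma subdivB_of_diPaths {P Q R : List V} (hP : DiPath A x y P) (hQ : DiPath A x y Q)
    (hR : DiPath A y x R) (hxy : x ≠ y) (hPQ : P ≠ Q)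
    (hdPQ : (internals P).Disjoint (internals Q)) (hdPR : (internals P).Disjoint (internals R))
    (hdQR : (internals Q).Disjoint (internals R)) : SubdivB A 2 1 1 := by
  obtain ⟨p, rfl⟩ := hP.eq_cons_append hxy
  obtain ⟨q, rfl⟩ := hQ.eq_cons_append hxy
  obtain ⟨r, rfl⟩ := hR.eq_cons_append hxy.symm
  rcases p with _ | ⟨p₀, p⟩
  · rcases q with _ | ⟨q₀, q⟩
    · exact absurd rfl hPQ
    · exact ⟨x, y, _, _, _, hQ, hP, hR, by simp, by simp, by simp, hPQ.symm,
        intDisj_of_disjoint hdPQ.symm, intDisj_of_disjoint hdQR, intDisj_of_disjoint hdPR⟩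
  · exact ⟨x, y, _, _, _, hP, hQ, hR, by simp, by simp, by simp, hPQ,
      intDisj_of_disjoint hdPQ, intDisj_of_disjoint hdPR, intDisj_of_disjoint hdQR⟩

end Subdivision

section Cycles

variable {V : Type*} {A : V → V → Prop} {c : List V} {u v : V}

lemma diCycle_iff_cycleChain : DiCycle A c ↔ c ≠ [] ∧ c.Nodup ∧ Cycle.Chain A (c : Cycle V) := by
  rcases c with _ | ⟨a, l⟩
  · simp [DiCycle]
  · simp only [DiCycle, Cycle.chain_coe_cons, ne_eq, reduceCtorEq, not_false_eq_true, true_and,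
      List.head?_cons, Option.some.injEq, List.Chain']
    rw [← List.cons_append, List.isChain_append]
    grind

lemma DiCycle.rotate (hc : DiCycle A c) (n : ℕ) : DiCycle A (c.rotate n) := by
  rw [diCycle_iff_cycleChain] at hc ⊢
  rw [Ne, List.rotate_eq_nil_iff, List.nodup_rotate,
    Cycle.coe_eq_coe.2 (List.IsRotated.forall c n)]
  exact hc

lemma DiCycle.diPath_of_eq_cons_append {r₁ r₂ : List V} (hc : DiCycle A (u :: (r₁ ++ v :: r₂))) :
    DiPath A u v (u :: (r₁ ++ [v])) ∧ DiPath A v u (v :: (r₂ ++ [u])) := by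
  obtain ⟨-, hnd, hch⟩ := diCycle_iff_cycleChain.1 hc
  rw [Cycle.chain_coe_cons] at hch
  exact ⟨.of_cons_append (hch.infix ⟨[], r₂ ++ [u], by simp⟩) (by grind),
    .of_cons_append (hch.infix ⟨u :: r₁, [], by simp⟩) (by grind)⟩

lemma DiCycle.of_arc_of_diPath {m : List V} (h : A u v) (hp : DiPath A v u (v :: (m ++ [u]))) :
    DiCycle A (u :: v :: m) := by
  refine diCycle_iff_cycleChain.2 ⟨by simp, by grind [DiPath], ?_⟩
  rw [Cycle.chain_coe_cons]
  exact List.isChain_cons_cons.2 ⟨h, hp.1⟩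

end Cycles

section NoSubdivision

variable {V : Type*} [DecidableEq V] {A : V → V → Prop} {c : List V} {u v : V}

/-- Unless `r` is the segment of `c` from `u` to `v`, it forms a subdivision of `B(2,1;1)` with
the two segments of `c` between `u` and `v`. -/
lemma eq_pair_of_internals_not_mem (hB : ¬ SubdivB A 2 1 1) (hc : DiCycle A c) (hu : u ∈ c)
    (hv : v ∈ c) (huv : u ≠ v) {r : List V} (hr : DiPath A u v r)
    (hint : ∀ z ∈ internals r, z ∉ c) : r = [u, v] ∧ cycDist c u v = 1 := by
  obtain ⟨r₁, r₂, hrot⟩ := List.exists_rotate_idxOf_eq hu hv huv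
  have hrc := hc.rotate (c.idxOf u)
  rw [hrot] at hrc
  obtain ⟨hP, hQ⟩ := hrc.diPath_of_eq_cons_append
  have hmem : ∀ z, z ∈ r₁ ∨ z ∈ r₂ → z ∈ c := fun z hz =>
    (List.mem_rotate (n := c.idxOf u)).1 <| by
      rw [hrot]; simp only [List.mem_cons, List.mem_append]; tauto
  have hr₁ : r = u :: (r₁ ++ [v]) := by
    by_contra hne
    refine hB (subdivB_of_diPaths hr hP hQ huv hne ?_ ?_ ?_) <;>
      simp only [internals_cons_append_singleton]
    · exact fun z hz hz₁ => hint z hz (hmem z (.inl hz₁))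
    · exact fun z hz hz₂ => hint z hz (hmem z (.inr hz₂))
    · have := hrc.2.2.1
      simp only [List.nodup_cons, List.nodup_append, List.mem_cons] at this
      exact fun z hz₁ hz₂ => this.2.2.2 z hz₁ z (.inr hz₂) rfl
  obtain rfl : r₁ = [] := List.eq_nil_iff_forall_not_mem.2 fun z hz =>
    hint z (by simp [hr₁, hz]) (hmem z (.inl hz))
  refine ⟨hr₁, ?_⟩
  rw [cycDist, hrot, List.nil_append, List.idxOf_cons_ne _ huv, List.idxOf_cons_self]

end NoSubdivision

section Attachment

variable {V : Type*} {A : V → V → Prop} {c : List V} {u v a b : V}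

def IsEntry (A : V → V → Prop) (c : List V) (v a : V) : Prop :=
  a ∈ c ∧ ∃ r, DiPath A a v r ∧ ∀ z ∈ r, z ∈ c → z = a

def IsExit (A : V → V → Prop) (c : List V) (v b : V) : Prop :=
  b ∈ c ∧ ∃ r, DiPath A v b r ∧ ∀ z ∈ r, z ∈ c → z = b

lemma exists_isEntry (hstrong : StrongConn A) (hc : c ≠ []) (v : V) : ∃ a, IsEntry A c v a := by
  obtain ⟨x, hx⟩ := List.exists_mem_of_ne_nil c hc
  obtain ⟨p, hp⟩ := hstrong x v
  obtain ⟨p₁, a, p₂, rfl, ha, hp₂⟩ :=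
    List.exists_eq_append_cons_last (p := (· ∈ c)) ⟨x, hp.head_mem, hx⟩
  refine ⟨a, ha, _, hp.dropUntil, fun z hz hzc => ?_⟩
  rcases List.mem_cons.1 hz with rfl | hz
  exacts [rfl, absurd hzc (hp₂ z hz)]

lemma exists_isExit (hstrong : StrongConn A) (hc : c ≠ []) (v : V) : ∃ b, IsExit A c v b := by
  obtain ⟨x, hx⟩ := List.exists_mem_of_ne_nil c hc
  obtain ⟨p, hp⟩ := hstrong v x
  obtain ⟨p₁, b, p₂, rfl, hb, hp₁⟩ :=
    List.exists_eq_append_cons_first (p := (· ∈ c)) ⟨x, hp.getLast_mem, hx⟩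
  refine ⟨b, hb, _, hp.takeUntil, fun z hz hzc => ?_⟩
  rcases List.mem_append.1 hz with hz | hz
  exacts [absurd hzc (hp₁ z hz), List.mem_singleton.1 hz]

lemma IsEntry.of_arc (h : A u v) (hu : u ∈ c) (hv : v ∉ c) : IsEntry A c v u :=
  ⟨hu, [u, v], .pair h (by rintro rfl; exact hv hu), by grind⟩

lemma IsExit.of_arc (h : A u v) (hu : u ∉ c) (hv : v ∈ c) : IsExit A c u v :=
  ⟨hv, [u, v], .pair h (by rintro rfl; exact hu hv), by grind⟩

lemma IsEntry.trans_arc (ha : IsEntry A c u a) (h : A u v) (huv : u ≠ v) (hu : u ∉ c)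
    (hv : v ∉ c) : IsEntry A c v a := by
  obtain ⟨hac, p, hp, hpc⟩ := ha
  obtain ⟨r, -, hr, -, -, -, hrp⟩ := hp.splice (.pair h huv)
  refine ⟨hac, r, hr, fun z hz hzc => ?_⟩
  rcases hrp z hz with hz | hz
  · exact hpc z hz hzc
  · simp only [List.mem_cons, List.not_mem_nil, or_false] at hz
    rcases hz with rfl | rfl <;> contradiction

open Classical in
noncomputable def attach (A : V → V → Prop) (c : List V) (v : V) : V :=
  if h : v ∉ c ∧ ∃ a, IsEntry A c v a then h.2.choose else v

lemma attach_of_mem (hv : v ∈ c) : attach A c v = v :=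
  dif_neg fun h => h.1 hv

lemma isEntry_attach (hstrong : StrongConn A) (hc : c ≠ []) (hv : v ∉ c) :
    IsEntry A c v (attach A c v) := by
  have h : v ∉ c ∧ ∃ a, IsEntry A c v a := ⟨hv, exists_isEntry hstrong hc v⟩
  rw [attach, dif_pos h]
  exact h.2.choose_spec

lemma attach_mem (hstrong : StrongConn A) (hc : c ≠ []) (v : V) : attach A c v ∈ c := by
  by_cases hv : v ∈ c
  · rwa [attach_of_mem hv]
  · exact (isEntry_attach hstrong hc hv).1

lemma attach_attach (hstrong : StrongConn A) (hc : c ≠ []) (v : V) :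
    attach A c (attach A c v) = attach A c v :=
  attach_of_mem (attach_mem hstrong hc v)

variable [DecidableEq V]

/-- The splice of an entry path and an exit path of `v` would be a path between two vertices
of `c` leaving `c`; it has to be an arc, which forces entry and exit to coincide. -/
lemma IsEntry.eq_of_isExit (hB : ¬ SubdivB A 2 1 1) (hc : DiCycle A c) (ha : IsEntry A c v a)
    (hb : IsExit A c v b) : a = b := by
  obtain ⟨hac, p, hp, hpc⟩ := ha
  obtain ⟨hbc, q, hq, hqc⟩ := hb
  by_contra hab
  obtain ⟨r, w, hr, hwr, hwp, hwq, hrpq⟩ := hp.splice hq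
  have hint : ∀ z ∈ internals r, z ∉ c := fun z hz hzc => by
    obtain ⟨hzr, hza, hzb⟩ := hr.ne_of_mem_internals hab hz
    rcases hrpq z hzr with h | h
    exacts [hza (hpc z h hzc), hzb (hqc z h hzc)]
  obtain ⟨rfl, -⟩ := eq_pair_of_internals_not_mem hB hc hac hbc hab hr hint
  rcases List.mem_pair.1 hwr with rfl | rfl
  exacts [hab (hqc w hwq hac), hab (hpc w hwp hbc).symm]

lemma attach_eq_of_isExit (hstrong : StrongConn A) (hB : ¬ SubdivB A 2 1 1) (hc : DiCycle A c)
    (hv : v ∉ c) (hb : IsExit A c v b) : attach A c v = b :=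
  (isEntry_attach hstrong hc.1 hv).eq_of_isExit hB hc hb

lemma attach_eq_of_isEntry (hstrong : StrongConn A) (hB : ¬ SubdivB A 2 1 1) (hc : DiCycle A c)
    (hv : v ∉ c) (ha : IsEntry A c v a) : attach A c v = a := by
  obtain ⟨b, hb⟩ := exists_isExit hstrong hc.1 v
  rw [attach_eq_of_isExit hstrong hB hc hv hb, ha.eq_of_isExit hB hc hb]

lemma mem_of_attach_ne (hstrong : StrongConn A) (hB : ¬ SubdivB A 2 1 1) (hc : DiCycle A c)
    (h : A u v) (hne : attach A c u ≠ attach A c v) : u ∈ c ∧ v ∈ c := by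
  have huv : u ≠ v := by rintro rfl; exact hne rfl
  by_cases hu : u ∈ c <;> by_cases hv : v ∈ c
  · exact ⟨hu, hv⟩
  · rw [attach_of_mem hu, attach_eq_of_isEntry hstrong hB hc hv (.of_arc h hu hv)] at hne
    exact absurd rfl hne
  · rw [attach_of_mem hv, attach_eq_of_isExit hstrong hB hc hu (.of_arc h hu hv)] at hne
    exact absurd rfl hne
  · have := (isEntry_attach hstrong hc.1 hu).trans_arc h huv hu hv
    exact absurd (attach_eq_of_isEntry hstrong hB hc hv this).symm hne

/-- A path between two vertices attached at `a` stays attached at `a`: leaving that class needs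
an arc of `c` out of `a`, and coming back an arc of `c` into `a`, so the path would visit `a`
twice. -/
lemma attach_eq_of_mem_diPath (hstrong : StrongConn A) (hB : ¬ SubdivB A 2 1 1)
    (hc : DiCycle A c) {x y : V} {p : List V} (hp : DiPath A x y p) (hx : attach A c x = a)
    (hy : attach A c y = a) : ∀ z ∈ p, attach A c z = a := by
  intro z hz
  by_contra hza
  obtain ⟨p₁, p₂, rfl⟩ := List.append_of_mem hz
  obtain ⟨w, hw, w', -, hww', hwa, hw'a⟩ :=
    hp.takeUntil.exists_arc_of_not (P := (attach A c · = a)) hx hza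
  obtain ⟨t, -, t', ht', htt', hta, ht'a⟩ :=
    hp.dropUntil.exists_arc_of_not (P := (attach A c · ≠ a)) hza (not_not.2 hy)
  rw [not_not] at ht'a
  have hwc := (mem_of_attach_ne hstrong hB hc hww' (hwa.trans_ne (Ne.symm hw'a))).1
  have ht'c := (mem_of_attach_ne hstrong hB hc htt' (hta.trans_eq ht'a.symm)).2
  obtain rfl : w = a := (attach_of_mem hwc).symm.trans hwa
  obtain rfl : t' = w := (attach_of_mem ht'c).symm.trans ht'a
  have hzw : z ≠ t' := by rintro rfl; exact hza (attach_of_mem hwc)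
  simp only [List.mem_append, List.mem_cons, List.not_mem_nil, or_false] at hw ht'
  exact List.disjoint_of_nodup_append hp.2.1 (hw.resolve_right hzw.symm)
    (List.mem_cons_of_mem z (ht'.resolve_left hzw.symm))

end Attachment

section CycleColoring

variable {V : Type*} [DecidableEq V] {A : V → V → Prop} {c : List V} {u v : V}

def cycleColor (n i : ℕ) : Fin 3 :=
  if i + 1 = n then 2 else ⟨i % 2, by omega⟩

lemma cycleColor_ne_succ {n i : ℕ} (hn : 2 ≤ n) (hi : i < n) :
    cycleColor n i ≠ cycleColor n ((i + 1) % n) := by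
  rcases Nat.lt_or_ge (i + 1) n with h | h
  · rw [Nat.mod_eq_of_lt h]
    unfold cycleColor
    split_ifs <;> simp only [ne_eq, Fin.ext_iff, Fin.val_two] <;> omega
  · rw [show i + 1 = n by omega, Nat.mod_self]
    unfold cycleColor
    split_ifs <;> simp only [ne_eq, Fin.ext_iff, Fin.val_two] <;> omega

lemma idxOf_eq_of_cycDist_eq_one (hc : c.Nodup) (hv : v ∈ c) (h : cycDist c u v = 1) :
    c.idxOf v = (c.idxOf u + 1) % c.length := by
  have hlt : (c.rotate (c.idxOf u)).idxOf v < (c.rotate (c.idxOf u)).length :=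
    List.idxOf_lt_length_iff.2 (List.mem_rotate.2 hv)
  have hget := List.getElem_idxOf hlt
  rw [List.getElem_rotate] at hget
  unfold cycDist at h
  simp only [h] at hget
  rw [← hget, hc.idxOf_getElem, Nat.add_comm]

lemma cycleColor_ne_of_arc (hB : ¬ SubdivB A 2 1 1) (hc : DiCycle A c) (hu : u ∈ c) (hv : v ∈ c)
    (huv : u ≠ v) (h : A u v) :
    cycleColor c.length (c.idxOf u) ≠ cycleColor c.length (c.idxOf v) := by
  have hdist := (eq_pair_of_internals_not_mem hB hc hu hv huv (.pair h huv) (by simp [internals])).2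
  have hiu := List.idxOf_lt_length_iff.2 hu
  have hiv := List.idxOf_lt_length_iff.2 hv
  have hne : c.idxOf u ≠ c.idxOf v := fun h => huv ((List.idxOf_inj hu).1 h)
  rw [idxOf_eq_of_cycDist_eq_one hc.2.2.1 hv hdist]
  exact cycleColor_ne_succ (by omega) hiu

end CycleColoring

namespace SimpleGraph

variable {V : Type*} {G : SimpleGraph V} {n : ℕ}

/-- Colour each fibre of `r` separately, permuting the colours of the fibre of `a` so that `a`
gets `g a`; edges between fibres join fixed points of `r`, where `g` is proper. -/
theorem Colorable.of_fibers (r : V → V) (hr : ∀ v, r (r v) = r v) (g : V → Fin n)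
    (hfib : ∀ v, (G.induce {w | r w = r v}).Colorable n)
    (hcross : ∀ u v, G.Adj u v → r u ≠ r v → r u = u ∧ r v = v ∧ g u ≠ g v) :
    G.Colorable n := by
  classical
  have C := fun v => (hfib v).some
  let col (a w : V) : Fin n := if h : r w = r a then C a ⟨w, h⟩ else g w
  have hcol {a u v : V} (hu : r u = r a) (hv : r v = r a) (h : G.Adj u v) : col a u ≠ col a v := by
    simp only [col, dif_pos hu, dif_pos hv]
    exact (C a).valid (v := ⟨u, hu⟩) (w := ⟨v, hv⟩) h
  refine ⟨Coloring.mk (fun w => Equiv.swap (col (r w) (r w)) (g (r w)) (col (r w) w)) ?_⟩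
  intro u v h
  by_cases huv : r u = r v
  · simp only [← huv]
    exact (Equiv.injective _).ne (hcol (hr u).symm (huv.symm.trans (hr u).symm) h)
  · obtain ⟨hu, hv, hg⟩ := hcross u v h huv
    simpa only [hu, hv, Equiv.swap_apply_left] using hg

lemma fromRel_induce {R : V → V → Prop} (s : Set V) :
    (fromRel R).induce s = fromRel (fun u v : s => R u v) := by
  ext u v
  simp [Subtype.ext_iff]

end SimpleGraph

lemma StrongConn.subtype {V : Type*} {A : V → V → Prop} (hstrong : StrongConn A) {Q : V → Prop}
    (hQ : ∀ x y p, DiPath A x y p → Q x → Q y → ∀ z ∈ p, Q z) :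
    StrongConn (fun u v : {z // Q z} => A u v) := by
  rintro ⟨x, hx⟩ ⟨y, hy⟩
  obtain ⟨p, hp⟩ := hstrong x y
  refine ⟨p.pmap Subtype.mk (hQ x y p hp hx hy), (DiPath.map_iff Subtype.val_injective).1 ?_⟩
  rwa [List.map_pmap, List.pmap_eq_map, List.map_id']

lemma exists_diCycle {V : Type*} [Nontrivial V] {A : V → V → Prop} (hstrong : StrongConn A) :
    ∃ c x y, DiCycle A c ∧ x ∈ c ∧ y ∈ c ∧ x ≠ y := by
  obtain ⟨x, y, hxy⟩ := exists_pair_ne V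
  obtain ⟨p, hp⟩ := hstrong x y
  obtain ⟨x', hxx', hne⟩ := hp.exists_arc hxy
  obtain ⟨q, hq⟩ := hstrong x' x
  obtain ⟨m, rfl⟩ := hq.eq_cons_append hne.symm
  exact ⟨_, x, x', DiCycle.of_arc_of_diPath hxx' hq, by simp, by simp, hne⟩

theorem colorable_three_of_not_subdivB {W : Type*} [Finite W] {A : W → W → Prop}
    (hstrong : StrongConn A) (hB : ¬ SubdivB A 2 1 1) : (SimpleGraph.fromRel A).Colorable 3 := by
  classical
  induction W using Finite.induction_subsingleton_or_nontrivial with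
  | hbase W =>
    exact ⟨.mk (fun _ => 0) fun h =>
      absurd (Subsingleton.elim _ _) ((SimpleGraph.fromRel_adj ..).1 h).1⟩
  | hstep W ih =>
    obtain ⟨c, x, y, hc, hx, hy, hxy⟩ := exists_diCycle hstrong
    refine .of_fibers (attach A c) (attach_attach hstrong hc.1)
      (fun w => cycleColor c.length (c.idxOf w)) (fun v => ?_) (fun u v h hne => ?_)
    · rw [SimpleGraph.fromRel_induce]
      refine ih _ ?_ (hstrong.subtype fun x y p hp hx hy =>
        attach_eq_of_mem_diPath hstrong hB hc hp hx hy)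
        fun h => hB (.of_comap Subtype.val_injective h)
      by_cases hxv : attach A c x = attach A c v
      · refine Finite.card_subtype_lt (x := y) fun hyv => hxy ?_
        rw [← attach_of_mem hx, ← attach_of_mem hy, hxv, hyv]
      · exact Finite.card_subtype_lt hxv
    · obtain ⟨huv, hA | hA⟩ := (SimpleGraph.fromRel_adj ..).1 h
      · obtain ⟨hu, hv⟩ := mem_of_attach_ne hstrong hB hc hA hne
        exact ⟨attach_of_mem hu, attach_of_mem hv, cycleColor_ne_of_arc hB hc hu hv huv hA⟩
      · obtain ⟨hv, hu⟩ := mem_of_attach_ne hstrong hB hc hA hne.symm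
        exact ⟨attach_of_mem hu, attach_of_mem hv,
          (cycleColor_ne_of_arc hB hc hv hu huv.symm hA).symm⟩

/-- Proposition 11: every strong digraph with chromatic number at least `4`
contains a subdivision of `B(2,1;1)`. -/
theorem stmt8 {V : Type u} [Fintype V] (A : V → V → Prop)
    (hstrong : StrongConn A) (h : (4 : ℕ∞) ≤ dchrom A) :
    SubdivB A 2 1 1 := by
  by_contra hB
  have := (colorable_three_of_not_subdivB hstrong hB).chromaticNumber_le
  rw [dchrom] at h
  exact absurd (h.trans this) (by norm_num)
end

section
/- Let D be a digraph with no subdivision of B(k,1;k), and let C_1, C_2, C_3 be directed cycles in D, each of length at least 8k, pairwise intersecting, such that any two of them intersect in a directed subpath with at most k vertices. Let v be a vertex in V(C_2) ∩ V(C_3) but not in V(C_1), let t_{1,2} (resp. t_{1,3}) be the terminal vertex of the intersection path of C_1 and C_2 (resp. C_1 and C_3), and s_{1,2}, s_{1,3} the initial vertices of these intersection paths. Then exactly one of the following holds: (i) the subpaths C_2[t_{1,2}, v] and C_3[t_{1,3}, v] both have length less than 3k; (ii) the subpaths C_2[v, s_{1,2}] and C_3[v, s_{1,3}] both have length less than 3k.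 -/
/-!
The two alternatives exclude each other because `C2[t12, v]` and `C2[v, s12]` together cover all
but fewer than `k` vertices of `C2`, which has at least `8k` of them (and likewise on `C3`).
If neither holds then, up to exchanging `C2` and `C3`, `v` comes at least `3k` steps after `t12`
on `C2` and at least `3k` steps before `s13` on `C3`. In that situation no vertex lies on all
three cycles, so the route `t13 → s12` along `C1` followed by `s12 → s23` along `C2`, together
with the two arcs of `C3` between `t13` and `s23`, is a subdivision of `B(k,1;k)` with ends
`t13` and `s23`.
-/

universe u

open List

section CyclicDistance

variable {V : Type u} [DecidableEq V] {l : List V} {a b c u w : V}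

theorem cycDist_eq_ite (hl : l.Nodup) (ha : a ∈ l) (hb : b ∈ l) :
    cycDist l a b = if l.idxOf a ≤ l.idxOf b then l.idxOf b - l.idxOf a
      else l.idxOf b + l.length - l.idxOf a := by
  have hA := idxOf_lt_length_of_mem ha
  have hB := idxOf_lt_length_of_mem hb
  set j := if l.idxOf a ≤ l.idxOf b then l.idxOf b - l.idxOf a
      else l.idxOf b + l.length - l.idxOf a with hj_def
  have hj : j < (l.rotate (l.idxOf a)).length := by
    rw [length_rotate, hj_def]; split_ifs <;> omega
  have hrot : (l.rotate (l.idxOf a))[j] = b := by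
    have hmod : (j + l.idxOf a) % l.length = l.idxOf b := by
      rw [hj_def]; split_ifs
      · rw [Nat.sub_add_cancel ‹_›, Nat.mod_eq_of_lt hB]
      · rw [show l.idxOf b + l.length - l.idxOf a + l.idxOf a = l.idxOf b + l.length by omega,
          Nat.add_mod_right, Nat.mod_eq_of_lt hB]
    simp only [getElem_rotate, hmod, getElem_idxOf]
  unfold cycDist
  rw [← hrot]
  exact (nodup_rotate.2 hl).idxOf_getElem j hj

theorem cycDist_lt_length_iff : cycDist l a b < l.length ↔ b ∈ l := by
  rw [cycDist, ← length_rotate l (l.idxOf a), idxOf_lt_length_iff, mem_rotate]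

theorem cycDist_lt_length (a : V) (hb : b ∈ l) : cycDist l a b < l.length :=
  cycDist_lt_length_iff.2 hb

theorem cycDist_eq_zero_iff (hl : l.Nodup) (ha : a ∈ l) (hb : b ∈ l) :
    cycDist l a b = 0 ↔ a = b := by
  have := idxOf_lt_length_of_mem ha
  have := idxOf_lt_length_of_mem hb
  rw [cycDist_eq_ite hl ha hb, ← idxOf_inj ha]
  split_ifs <;> omega

theorem cycDist_add_cycDist_swap (hl : l.Nodup) (ha : a ∈ l) (hb : b ∈ l) (hab : a ≠ b) :
    cycDist l a b + cycDist l b a = l.length := by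
  have := idxOf_lt_length_of_mem ha
  have := idxOf_lt_length_of_mem hb
  have : l.idxOf a ≠ l.idxOf b := mt (idxOf_inj ha).1 hab
  rw [cycDist_eq_ite hl ha hb, cycDist_eq_ite hl hb ha]
  split_ifs <;> omega

theorem cycDist_add_cycDist (hl : l.Nodup) (ha : a ∈ l) (hb : b ∈ l) (hc : c ∈ l) :
    cycDist l a b + cycDist l b c = cycDist l a c ∨
      cycDist l a b + cycDist l b c = cycDist l a c + l.length := by
  have := idxOf_lt_length_of_mem ha
  have := idxOf_lt_length_of_mem hb
  have := idxOf_lt_length_of_mem hc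
  rw [cycDist_eq_ite hl ha hb, cycDist_eq_ite hl hb hc, cycDist_eq_ite hl ha hc]
  split_ifs <;> omega

theorem cycDist_add_cycDist_of_le_left (hl : l.Nodup) (ha : a ∈ l) (hb : b ∈ l) (hc : c ∈ l)
    (h : cycDist l a b ≤ cycDist l a c) :
    cycDist l a b + cycDist l b c = cycDist l a c := by
  have := cycDist_lt_length b hc
  have := cycDist_lt_length a hc
  have := cycDist_add_cycDist hl ha hb hc
  omega

theorem cycDist_add_cycDist_of_le_right (hl : l.Nodup) (ha : a ∈ l) (hb : b ∈ l) (hc : c ∈ l)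
    (h : cycDist l b c ≤ cycDist l a c) :
    cycDist l a b + cycDist l b c = cycDist l a c := by
  have := cycDist_lt_length a hb
  have := cycDist_add_cycDist hl ha hb hc
  omega

theorem mem_cycSub_iff : w ∈ cycSub l a b ↔ w ∈ l ∧ cycDist l a w ≤ cycDist l a b := by
  unfold cycSub cycDist
  by_cases hw : w ∈ l
  · rw [mem_take_iff_idxOf_lt (mem_rotate.2 hw)]
    simp [hw]
  · simp only [hw, false_and, iff_false]
    exact fun h => hw (mem_rotate.1 (mem_of_mem_take h))

theorem mem_of_mem_cycSub (hw : w ∈ cycSub l a b) : w ∈ l := (mem_cycSub_iff.1 hw).1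

theorem head?_cycSub (ha : a ∈ l) : (cycSub l a b).head? = some a := by
  rw [cycSub, head?_take, if_neg (Nat.succ_ne_zero _), head?_rotate (idxOf_lt_length_of_mem ha),
    getElem?_idxOf ha]

theorem getLast?_cycSub (hb : b ∈ l) : (cycSub l a b).getLast? = some b := by
  have hb' : b ∈ l.rotate (l.idxOf a) := mem_rotate.2 hb
  rw [cycSub, getLast?_take, if_neg (Nat.succ_ne_zero _), Nat.add_sub_cancel, cycDist,
    getElem?_idxOf hb', Option.some_or]

theorem left_mem_cycSub (ha : a ∈ l) : a ∈ cycSub l a b :=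
  mem_of_mem_head? (head?_cycSub ha)

theorem right_mem_cycSub (hb : b ∈ l) : b ∈ cycSub l a b :=
  mem_cycSub_iff.2 ⟨hb, le_rfl⟩

theorem length_cycSub_eq_min : (cycSub l a b).length = min (cycDist l a b + 1) l.length := by
  rw [cycSub, length_take, length_rotate]

theorem length_cycSub (hb : b ∈ l) :
    (cycSub l a b).length = cycDist l a b + 1 := by
  have := cycDist_lt_length a hb
  rw [length_cycSub_eq_min]; omega

theorem idxOf_cycSub (hw : w ∈ cycSub l a b) : (cycSub l a b).idxOf w = cycDist l a w :=
  (take_prefix _ _).idxOf_eq_of_mem hw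

theorem cycDist_add_cycDist_of_mem_of_notMem (hl : l.Nodup) (ha : a ∈ l) (hb : b ∈ l)
    (hu : u ∈ cycSub l a b) (hw : w ∈ l) (hw' : w ∉ cycSub l a b) :
    cycDist l u b + cycDist l b w = cycDist l u w := by
  obtain ⟨hu, hub⟩ := mem_cycSub_iff.1 hu
  have hbw : cycDist l a b < cycDist l a w := by
    by_contra h; exact hw' (mem_cycSub_iff.2 ⟨hw, not_lt.1 h⟩)
  have := cycDist_add_cycDist_of_le_left hl ha hu hb hub
  have := cycDist_add_cycDist_of_le_left hl ha hb hw hbw.le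
  have := cycDist_add_cycDist_of_le_left hl ha hu hw (hub.trans hbw.le)
  omega

theorem cycDist_add_cycDist_of_notMem_of_mem (hl : l.Nodup) (ha : a ∈ l)
    (hu : u ∈ cycSub l a b) (hw : w ∈ l) (hw' : w ∉ cycSub l a b) :
    cycDist l w a + cycDist l a u = cycDist l w u := by
  have hwa : w ≠ a := by rintro rfl; exact hw' (left_mem_cycSub hw)
  have hwu : w ≠ u := fun h => hw' (h ▸ hu)
  obtain ⟨hu, hub⟩ := mem_cycSub_iff.1 hu
  have hbw : cycDist l a b < cycDist l a w := by
    by_contra h; exact hw' (mem_cycSub_iff.2 ⟨hw, not_lt.1 h⟩)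
  have := cycDist_add_cycDist_of_le_left hl ha hu hw (hub.trans hbw.le)
  have := cycDist_add_cycDist_swap hl hw ha hwa
  have := cycDist_add_cycDist_swap hl hw hu hwu
  have := cycDist_add_cycDist hl hw ha hu
  omega

theorem length_lt_cycDist_add_cycDist_add (hl : l.Nodup) (ha : a ∈ l) (hb : b ∈ l)
    (hw : w ∈ l) (hw' : w ∉ cycSub l a b) :
    l.length < cycDist l b w + cycDist l w a + (cycDist l a b + 1) := by
  have haw : a ≠ w := by rintro rfl; exact hw' (left_mem_cycSub ha)
  have := cycDist_add_cycDist_of_mem_of_notMem hl ha hb (left_mem_cycSub ha) hw hw'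
  have := cycDist_add_cycDist_swap hl ha hw haw
  omega

theorem eq_of_mem_cycSub_of_mem_cycSub (hl : l.Nodup) (ha : a ∈ l) (hb : b ∈ l)
    (hlt : cycDist l a b + cycDist l b c < l.length)
    (hwab : w ∈ cycSub l a b) (hwbc : w ∈ cycSub l b c) : w = b := by
  obtain ⟨hw, hwab⟩ := mem_cycSub_iff.1 hwab
  have hwbc := (mem_cycSub_iff.1 hwbc).2
  by_contra hwb
  have := cycDist_add_cycDist_of_le_left hl ha hw hb hwab
  have := cycDist_add_cycDist_swap hl hw hb hwb
  omega

theorem eq_of_mem_cycSub_of_mem_cycSub_of_notMem_left (hl : l.Nodup) (ha : a ∈ l) (hb : b ∈ l)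
    (ha' : a ∉ cycSub l b c)
    (hwab : w ∈ cycSub l a b) (hwbc : w ∈ cycSub l b c) : w = b := by
  have hab : a ≠ b := by rintro rfl; exact ha' (left_mem_cycSub ha)
  have : cycDist l b c < cycDist l b a := by
    by_contra h; exact ha' (mem_cycSub_iff.2 ⟨ha, not_lt.1 h⟩)
  have := cycDist_add_cycDist_swap hl ha hb hab
  exact eq_of_mem_cycSub_of_mem_cycSub hl ha hb (by omega) hwab hwbc

theorem eq_of_mem_cycSub_of_mem_cycSub_of_notMem_right (hl : l.Nodup) (ha : a ∈ l)
    (hb : b ∈ l) (hc : c ∈ l) (hc' : c ∉ cycSub l a b)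
    (hwab : w ∈ cycSub l a b) (hwbc : w ∈ cycSub l b c) : w = b := by
  have : cycDist l a b < cycDist l a c := by
    by_contra h; exact hc' (mem_cycSub_iff.2 ⟨hc, not_lt.1 h⟩)
  have := cycDist_lt_length b hc
  have := cycDist_lt_length a hc
  have := cycDist_add_cycDist hl ha hb hc
  exact eq_of_mem_cycSub_of_mem_cycSub hl ha hb (by omega) hwab hwbc

theorem eq_or_eq_of_mem_cycSub_of_mem_cycSub_swap (hl : l.Nodup) (ha : a ∈ l) (hb : b ∈ l)
    (hwab : w ∈ cycSub l a b) (hwba : w ∈ cycSub l b a) : w = a ∨ w = b := by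
  obtain ⟨hw, hwab⟩ := mem_cycSub_iff.1 hwab
  have hwba := (mem_cycSub_iff.1 hwba).2
  by_contra! h
  have := cycDist_add_cycDist_of_le_left hl ha hw hb hwab
  have := cycDist_add_cycDist_of_le_left hl hb hw ha hwba
  have := cycDist_add_cycDist_swap hl hw ha h.1
  have := cycDist_add_cycDist_swap hl hw hb h.2
  have := cycDist_lt_length a hb
  have := cycDist_lt_length b ha
  omega

end CyclicDistance

section Paths

variable {V : Type u} {A : V → V → Prop} {l p q : List V} {a b x y z : V}

theorem DiCycle.nodup (h : DiCycle A l) : l.Nodup :=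
  h.2.2.1

theorem DiCycle.isChain_rotate (hC : DiCycle A l) (m : ℕ) : (l.rotate m).IsChain A := by
  obtain ⟨-, hch, -, hwrap⟩ := hC
  have hll : (l ++ l).IsChain A :=
    isChain_append.2 ⟨hch, hch, fun _ h₁ _ h₂ => hwrap _ _ h₁ h₂⟩
  refine hll.infix ⟨l.take (m % l.length), l.drop (m % l.length), ?_⟩
  rw [rotate_eq_drop_append_take_mod, ← append_assoc, append_assoc _ _ (l.drop _),
    take_append_drop]

theorem diPath_cycSub [DecidableEq V] (hC : DiCycle A l) (ha : a ∈ l) (hb : b ∈ l) :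
    DiPath A a b (cycSub l a b) := by
  refine ⟨(hC.isChain_rotate _).take _, (take_sublist _ _).nodup (nodup_rotate.2 hC.nodup),
    head?_cycSub ha, getLast?_cycSub hb⟩

theorem DiPath.append_s14 (hp : DiPath A x y p) (hq : DiPath A y z q)
    (hpq : ∀ w ∈ p, w ∈ q → w = y) : DiPath A x z (p ++ q.tail) := by
  obtain ⟨hpc, hpn, hph, hpl⟩ := hp
  obtain ⟨hqc, hqn, hqh, hql⟩ := hq
  obtain ⟨t, rfl⟩ := head?_eq_some_iff.1 hqh
  obtain ⟨s, rfl⟩ := getLast?_eq_some_iff.1 hpl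
  have hyt : y ∉ t := (nodup_cons.1 hqn).1
  refine ⟨?_, ?_, ?_, ?_⟩
  · rw [tail_cons, append_assoc, singleton_append]
    exact isChain_split.2 ⟨hpc, hqc⟩
  · refine nodup_append.2 ⟨hpn, (nodup_cons.1 hqn).2, ?_⟩
    rintro w hwp w' hwt rfl
    exact hyt (hpq w hwp (mem_cons_of_mem y hwt) ▸ hwt)
  · simpa using hph
  · cases t <;> simp_all

theorem notMem_internals_of_head? (hp : p.Nodup) (hx : p.head? = some x) :
    x ∉ internals p := by
  obtain ⟨t, rfl⟩ := head?_eq_some_iff.1 hx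
  exact fun h => (nodup_cons.1 hp).1 (mem_of_mem_dropLast h)

theorem notMem_internals_of_getLast? (hp : p.Nodup) (hy : p.getLast? = some y) :
    y ∉ internals p := by
  obtain ⟨s, rfl⟩ := getLast?_eq_some_iff.1 hy
  rw [internals, ← tail_dropLast, dropLast_concat]
  exact fun h => (nodup_append.1 hp).2.2 y (mem_of_mem_tail h) y (mem_singleton_self y) rfl

theorem intDisj_of_inter_subset (hp : DiPath A x y p)
    (hpq : ∀ w ∈ p, w ∈ q → w = x ∨ w = y) : IntDisj p q := by
  have key : ∀ w ∈ internals p, w ∉ internals q := by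
    intro w hwp hwq
    rcases hpq w (mem_of_mem_tail (mem_of_mem_dropLast hwp))
      (mem_of_mem_tail (mem_of_mem_dropLast hwq)) with rfl | rfl
    · exact notMem_internals_of_head? hp.2.1 hp.2.2.1 hwp
    · exact notMem_internals_of_getLast? hp.2.1 hp.2.2.2 hwp
  exact ⟨key, fun w hwq hwp => key w hwp hwq⟩

end Paths

namespace InterPath

variable {V : Type u} [DecidableEq V] {k : ℕ} {Ci Cj : List V} {a b x : V}

theorem mem_and_mem_iff (h : InterPath k Ci Cj a b) :
    x ∈ Ci ∧ x ∈ Cj ↔ x ∈ cycSub Ci a b :=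
  h.2.2.1 x

theorem cycSub_eq (h : InterPath k Ci Cj a b) : cycSub Ci a b = cycSub Cj a b :=
  h.2.2.2.1

theorem cycDist_lt (h : InterPath k Ci Cj a b) (hk : k < Ci.length) : cycDist Ci a b < k := by
  have := h.2.2.2.2
  rw [length_cycSub_eq_min] at this
  omega

theorem cycDist_right_lt (h : InterPath k Ci Cj a b) (hk : k < Cj.length) :
    cycDist Cj a b < k := by
  have := h.2.2.2.2
  rw [h.cycSub_eq, length_cycSub_eq_min] at this
  omega

theorem right_mem_left (h : InterPath k Ci Cj a b) (hk : k < Ci.length) : b ∈ Ci :=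
  cycDist_lt_length_iff.1 ((h.cycDist_lt hk).trans hk)

theorem left_mem_right (h : InterPath k Ci Cj a b) : a ∈ Cj :=
  (h.mem_and_mem_iff.2 (left_mem_cycSub h.1)).2

theorem mem_and_mem_iff_right (h : InterPath k Ci Cj a b) :
    x ∈ Ci ∧ x ∈ Cj ↔ x ∈ cycSub Cj a b := by
  rw [h.mem_and_mem_iff, h.cycSub_eq]

theorem endpoints_mem (h : InterPath k Ci Cj a b) (hk : k < Ci.length) :
    (a ∈ Ci ∧ a ∈ Cj) ∧ (b ∈ Ci ∧ b ∈ Cj) :=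
  ⟨⟨h.1, h.left_mem_right⟩, ⟨h.right_mem_left hk, h.2.1⟩⟩

theorem notMem_cycSub (h : InterPath k Ci Cj a b) (hx : x ∉ Cj) : x ∉ cycSub Ci a b :=
  fun hx' => hx (h.mem_and_mem_iff.2 hx').2

theorem notMem_cycSub_right (h : InterPath k Ci Cj a b) (hx : x ∉ Ci) :
    x ∉ cycSub Cj a b :=
  fun hx' => hx (h.mem_and_mem_iff_right.2 hx').1

theorem symm (h : InterPath k Ci Cj a b) (hk : k < Ci.length) :
    InterPath k Cj Ci a b :=
  ⟨h.left_mem_right, h.right_mem_left hk,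
    fun _ => by rw [and_comm, h.mem_and_mem_iff, h.cycSub_eq],
    h.cycSub_eq.symm, h.cycSub_eq ▸ h.2.2.2.2⟩

theorem cycDist_eq_of_mem (h : InterPath k Ci Cj a b) (hxi : x ∈ Ci) (hxj : x ∈ Cj) :
    cycDist Ci a x = cycDist Cj a x := by
  have hx := h.mem_and_mem_iff.1 ⟨hxi, hxj⟩
  rw [← idxOf_cycSub hx, ← idxOf_cycSub (h.cycSub_eq ▸ hx), h.cycSub_eq]

theorem cycDist_lt_of_mem (h : InterPath k Ci Cj a b) (hk : k < Ci.length) (hxi : x ∈ Ci)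
    (hxj : x ∈ Cj) : cycDist Ci a x < k :=
  (mem_cycSub_iff.1 (h.mem_and_mem_iff.1 ⟨hxi, hxj⟩)).2.trans_lt (h.cycDist_lt hk)

theorem length_lt_cycDist_add_cycDist_add (h : InterPath k Ci Cj a b) (hj : Cj.Nodup)
    (hk : k < Cj.length) (hxj : x ∈ Cj) (hxi : x ∉ Ci) :
    Cj.length < cycDist Cj b x + cycDist Cj x a + k := by
  have := _root_.length_lt_cycDist_add_cycDist_add hj h.left_mem_right h.2.1 hxj
    (h.notMem_cycSub_right hxi)
  have := h.cycDist_right_lt hk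
  omega

end InterPath

structure SpindleConfig {V : Type u} [DecidableEq V] (A : V → V → Prop) (k : ℕ)
    (C1 C2 C3 : List V) (s12 t12 s13 t13 s23 t23 v : V) : Prop where
  cycle1 : DiCycle A C1
  cycle2 : DiCycle A C2
  cycle3 : DiCycle A C3
  long1 : 8 * k ≤ C1.length
  long2 : 8 * k ≤ C2.length
  inter12 : InterPath k C1 C2 s12 t12
  inter13 : InterPath k C1 C3 s13 t13
  inter23 : InterPath k C2 C3 s23 t23
  mem2 : v ∈ C2
  mem3 : v ∈ C3
  notMem1 : v ∉ C1
  far2 : 3 * k ≤ cycDist C2 t12 v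
  far3 : 3 * k ≤ cycDist C3 v s13

namespace SpindleConfig

variable {V : Type u} [DecidableEq V] {A : V → V → Prop} {k : ℕ} {C1 C2 C3 : List V}
  {s12 t12 s13 t13 s23 t23 v w : V}

theorem k_lt_length1 (S : SpindleConfig A k C1 C2 C3 s12 t12 s13 t13 s23 t23 v) :
    k < C1.length := by
  have := S.long1
  have := length_pos_of_mem S.inter12.1
  omega

theorem k_lt_length2 (S : SpindleConfig A k C1 C2 C3 s12 t12 s13 t13 s23 t23 v) :
    k < C2.length := by
  have := S.long2
  have := length_pos_of_mem S.mem2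
  omega

/- `w` and `v` both lie in the short block `C2 ∩ C3`; whichever of them comes first, the short
arc between them passes through `t12` on `C2` or through `s13` on `C3`, against `far2`/`far3`. -/
theorem notMem3_of_mem1_of_mem2 (S : SpindleConfig A k C1 C2 C3 s12 t12 s13 t13 s23 t23 v)
    (hw1 : w ∈ C1) (hw2 : w ∈ C2) : w ∉ C3 := by
  intro hw3
  have hn2 := S.cycle2.nodup
  have hn3 := S.cycle3.nodup
  obtain ⟨⟨-, hs12⟩, -, ht12⟩ := S.inter12.endpoints_mem S.k_lt_length1
  obtain ⟨⟨-, hs13⟩, -, ht13⟩ := S.inter13.endpoints_mem S.k_lt_length1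
  obtain ⟨⟨hs23, hs23'⟩, -⟩ := S.inter23.endpoints_mem S.k_lt_length2
  have hw12 := S.inter12.mem_and_mem_iff_right.1 ⟨hw1, hw2⟩
  have hw13 := S.inter13.mem_and_mem_iff_right.1 ⟨hw1, hw3⟩
  have := S.inter23.cycDist_eq_of_mem hw2 hw3
  have := S.inter23.cycDist_eq_of_mem S.mem2 S.mem3
  have := S.inter23.cycDist_lt_of_mem S.k_lt_length2 hw2 hw3
  have := S.inter23.cycDist_lt_of_mem S.k_lt_length2 S.mem2 S.mem3
  rcases le_or_gt (cycDist C2 s23 w) (cycDist C2 s23 v) with h | h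
  · have := cycDist_add_cycDist_of_le_left hn2 hs23 hw2 S.mem2 h
    have := cycDist_add_cycDist_of_mem_of_notMem hn2 hs12 ht12 hw12 S.mem2
      (S.inter12.notMem_cycSub_right S.notMem1)
    have := S.far2
    omega
  · have := cycDist_add_cycDist_of_le_left hn3 hs23' S.mem3 hw3 (by omega)
    have := cycDist_add_cycDist_of_notMem_of_mem hn3 hs13 hw13 S.mem3
      (S.inter13.notMem_cycSub_right S.notMem1)
    have := S.far3
    omega

theorem t13_notMem2 (S : SpindleConfig A k C1 C2 C3 s12 t12 s13 t13 s23 t23 v) :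
    t13 ∉ C2 := fun h =>
  S.notMem3_of_mem1_of_mem2 (S.inter13.right_mem_left S.k_lt_length1) h S.inter13.2.1

theorem s12_notMem3 (S : SpindleConfig A k C1 C2 C3 s12 t12 s13 t13 s23 t23 v) :
    s12 ∉ C3 :=
  S.notMem3_of_mem1_of_mem2 S.inter12.1 S.inter12.left_mem_right

theorem s23_notMem1 (S : SpindleConfig A k C1 C2 C3 s12 t12 s13 t13 s23 t23 v) :
    s23 ∉ C1 := fun h =>
  S.notMem3_of_mem1_of_mem2 h S.inter23.1 S.inter23.left_mem_right

theorem k_lt_cycDist_s12_s23 (S : SpindleConfig A k C1 C2 C3 s12 t12 s13 t13 s23 t23 v) :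
    k < cycDist C2 s12 s23 := by
  have hn2 := S.cycle2.nodup
  obtain ⟨⟨-, hs12⟩, -, ht12⟩ := S.inter12.endpoints_mem S.k_lt_length1
  have hs23 := S.inter23.1
  have := S.inter23.cycDist_lt_of_mem S.k_lt_length2 S.mem2 S.mem3
  have := S.far2
  have := cycDist_add_cycDist_of_le_right hn2 ht12 hs23 S.mem2 (by omega)
  have := cycDist_add_cycDist_of_mem_of_notMem hn2 hs12 ht12 (left_mem_cycSub hs12) hs23
    (S.inter12.notMem_cycSub_right S.s23_notMem1)
  omega

theorem k_le_cycDist_s23_t13 (S : SpindleConfig A k C1 C2 C3 s12 t12 s13 t13 s23 t23 v) :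
    k ≤ cycDist C3 s23 t13 := by
  have hn3 := S.cycle3.nodup
  obtain ⟨⟨-, hs13⟩, -, ht13⟩ := S.inter13.endpoints_mem S.k_lt_length1
  have hs23 := S.inter23.left_mem_right
  have := cycDist_add_cycDist_of_notMem_of_mem hn3 hs23
    (S.inter23.mem_and_mem_iff_right.1 ⟨S.mem2, S.mem3⟩) ht13
    (S.inter23.notMem_cycSub_right S.t13_notMem2)
  have := cycDist_add_cycDist_of_mem_of_notMem hn3 hs13 ht13 (left_mem_cycSub hs13) S.mem3
    (S.inter13.notMem_cycSub_right S.notMem1)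
  have := cycDist_add_cycDist_swap hn3 hs13 S.mem3 (fun h => S.notMem1 (h ▸ S.inter13.1))
  have := cycDist_add_cycDist_swap hn3 hs23 ht13 (fun h => S.t13_notMem2 (h ▸ S.inter23.1))
  have := S.far3
  omega

theorem eq_t13_of_mem (S : SpindleConfig A k C1 C2 C3 s12 t12 s13 t13 s23 t23 v)
    (hw : w ∈ cycSub C1 t13 s12) (hw3 : w ∈ C3) : w = t13 :=
  eq_of_mem_cycSub_of_mem_cycSub_of_notMem_right S.cycle1.nodup S.inter13.1
    (S.inter13.right_mem_left S.k_lt_length1) S.inter12.1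
    (S.inter13.notMem_cycSub S.s12_notMem3)
    (S.inter13.mem_and_mem_iff.1 ⟨mem_of_mem_cycSub hw, hw3⟩) hw

theorem eq_s23_of_mem (S : SpindleConfig A k C1 C2 C3 s12 t12 s13 t13 s23 t23 v)
    (hw : w ∈ cycSub C2 s12 s23) (hw3 : w ∈ C3) : w = s23 :=
  eq_of_mem_cycSub_of_mem_cycSub_of_notMem_left S.cycle2.nodup S.inter12.left_mem_right
    S.inter23.1 (S.inter23.notMem_cycSub S.s12_notMem3)
    hw (S.inter23.mem_and_mem_iff.1 ⟨mem_of_mem_cycSub hw, hw3⟩)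

theorem eq_s12_of_mem (S : SpindleConfig A k C1 C2 C3 s12 t12 s13 t13 s23 t23 v)
    (hw1 : w ∈ cycSub C1 t13 s12) (hw2 : w ∈ cycSub C2 s12 s23) : w = s12 :=
  eq_of_mem_cycSub_of_mem_cycSub_of_notMem_left S.cycle1.nodup
    (S.inter13.right_mem_left S.k_lt_length1) S.inter12.1
    (S.inter12.notMem_cycSub S.t13_notMem2)
    hw1 (S.inter12.mem_and_mem_iff.1 ⟨mem_of_mem_cycSub hw1, mem_of_mem_cycSub hw2⟩)

theorem subdivB (S : SpindleConfig A k C1 C2 C3 s12 t12 s13 t13 s23 t23 v) :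
    SubdivB A k 1 k := by
  obtain ⟨⟨hs12, hs12'⟩, -⟩ := S.inter12.endpoints_mem S.k_lt_length1
  obtain ⟨-, ht13, ht13'⟩ := S.inter13.endpoints_mem S.k_lt_length1
  obtain ⟨⟨hs23, hs23'⟩, -⟩ := S.inter23.endpoints_mem S.k_lt_length2
  set P1 := cycSub C1 t13 s12 ++ (cycSub C2 s12 s23).tail
  have hP1 : DiPath A t13 s23 P1 :=
    (diPath_cycSub S.cycle1 ht13 hs12).append_s14 (diPath_cycSub S.cycle2 hs12' hs23)
      fun _ hw1 hw2 => S.eq_s12_of_mem hw1 hw2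
  have hP1C3 : ∀ w ∈ P1, w ∈ C3 → w = t13 ∨ w = s23 := fun w hw hw3 =>
    (mem_append.1 hw).imp (S.eq_t13_of_mem · hw3)
      (fun hw' => S.eq_s23_of_mem (mem_of_mem_tail hw') hw3)
  have ht13s23 : t13 ≠ s23 := fun h => S.t13_notMem2 (h ▸ hs23)
  have hs12P1 : s12 ∈ P1 := mem_append_left _ (right_mem_cycSub hs12)
  refine ⟨t13, s23, P1, cycSub C3 t13 s23, cycSub C3 s23 t13, hP1,
    diPath_cycSub S.cycle3 ht13' hs23', diPath_cycSub S.cycle3 hs23' ht13', ?_, ?_, ?_,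
    fun h => S.s12_notMem3 (mem_of_mem_cycSub (h ▸ hs12P1)),
    intDisj_of_inter_subset hP1 fun w hw hw' => hP1C3 w hw (mem_of_mem_cycSub hw'),
    intDisj_of_inter_subset hP1 fun w hw hw' => hP1C3 w hw (mem_of_mem_cycSub hw'),
    intDisj_of_inter_subset (diPath_cycSub S.cycle3 ht13' hs23') fun _ hw hw' =>
      eq_or_eq_of_mem_cycSub_of_mem_cycSub_swap S.cycle3.nodup ht13' hs23' hw hw'⟩
  · have := S.k_lt_cycDist_s12_s23
    simp only [P1, length_append, length_tail, length_cycSub hs12, length_cycSub hs23]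
    omega
  · have := (cycDist_eq_zero_iff S.cycle3.nodup ht13' hs23').not.2 ht13s23
    rw [length_cycSub hs23']
    omega
  · have := S.k_le_cycDist_s23_t13
    rw [length_cycSub ht13']
    omega

end SpindleConfig

theorem stmt14_general {V : Type u} [DecidableEq V] (k : ℕ)
    (A : V → V → Prop) (hfree : ¬ SubdivB A k 1 k)
    (C1 C2 C3 : List V)
    (h1 : DiCycle A C1 ∧ 8 * k ≤ C1.length)
    (h2 : DiCycle A C2 ∧ 8 * k ≤ C2.length)
    (h3 : DiCycle A C3 ∧ 8 * k ≤ C3.length)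
    (s12 t12 s13 t13 s23 t23 : V)
    (hi12 : InterPath k C1 C2 s12 t12)
    (hi13 : InterPath k C1 C3 s13 t13)
    (hi23 : InterPath k C2 C3 s23 t23)
    (v : V) (hv2 : v ∈ C2) (hv3 : v ∈ C3) (hv1 : v ∉ C1) :
    Xor' (cycDist C2 t12 v < 3 * k ∧ cycDist C3 t13 v < 3 * k)
         (cycDist C2 v s12 < 3 * k ∧ cycDist C3 v s13 < 3 * k) := by
  have hk2 : k < C2.length := by have := length_pos_of_mem hv2; have := h2.2; omega
  have hk3 : k < C3.length := by have := length_pos_of_mem hv3; have := h3.2; omega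
  have hsum2 := hi12.length_lt_cycDist_add_cycDist_add h2.1.nodup hk2 hv2 hv1
  have hsum3 := hi13.length_lt_cycDist_add_cycDist_add h3.1.nodup hk3 hv3 hv1
  have hfar : ¬ (3 * k ≤ cycDist C2 t12 v ∧ 3 * k ≤ cycDist C3 v s13) := fun h =>
    hfree (SpindleConfig.subdivB ⟨h1.1, h2.1, h3.1, h1.2, h2.2, hi12, hi13, hi23,
      hv2, hv3, hv1, h.1, h.2⟩)
  have hfar' : ¬ (3 * k ≤ cycDist C3 t13 v ∧ 3 * k ≤ cycDist C2 v s12) := fun h =>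
    hfree (SpindleConfig.subdivB ⟨h1.1, h3.1, h2.1, h1.2, h3.2, hi13, hi12,
      hi23.symm hk2, hv3, hv2, hv1, h.1, h.2⟩)
  have := h2.2
  have := h3.2
  exact xor_def.2 (by omega)

/-- Lemma 15: in a `B(k,1;k)`-subdivision-free digraph, given three pairwise
intersecting cycles `C1, C2, C3` of a `k`-suitable collection and a vertex
`v ∈ C2 ∩ C3` with `v ∉ C1`, exactly one of the following holds:
(i) `C2[t12,v]` and `C3[t13,v]` both have length less than `3k`;
(ii) `C2[v,s12]` and `C3[v,s13]` both have length less than `3k`. -/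
theorem stmt14 {V : Type u} [Fintype V] [DecidableEq V] (k : ℕ) (hk : 1 ≤ k)
    (A : V → V → Prop) (hfree : ¬ SubdivB A k 1 k)
    (C1 C2 C3 : List V)
    (h1 : DiCycle A C1 ∧ 8 * k ≤ C1.length)
    (h2 : DiCycle A C2 ∧ 8 * k ≤ C2.length)
    (h3 : DiCycle A C3 ∧ 8 * k ≤ C3.length)
    (hne12 : C1 ≠ C2) (hne13 : C1 ≠ C3) (hne23 : C2 ≠ C3)
    (s12 t12 s13 t13 s23 t23 : V)
    (hi12 : InterPath k C1 C2 s12 t12)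
    (hi13 : InterPath k C1 C3 s13 t13)
    (hi23 : InterPath k C2 C3 s23 t23)
    (v : V) (hv2 : v ∈ C2) (hv3 : v ∈ C3) (hv1 : v ∉ C1) :
    Xor' (cycDist C2 t12 v < 3 * k ∧ cycDist C3 t13 v < 3 * k)
         (cycDist C2 v s12 < 3 * k ∧ cycDist C3 v s13 < 3 * k) :=
  stmt14_general k A hfree C1 C2 C3 h1 h2 h3 s12 t12 s13 t13 s23 t23 hi12 hi13 hi23 v hv2 hv3 hv1
end
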